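/- arXiv:0904.0942 — 4 statements merged into one kernel-verified Lean document; each statement's English description precedes it below -/
import Mathlib

section
/- Let ε > 0, Δ > 0, and d ≥ 1. Let λ_b denote the Laplace probability measure on ℝ with scale b, i.e., the measure with density x ↦ (1/(2b))·exp(−|x|/b) with respect to Lebesgue measure, and let μ_v denote the d-fold product of λ_{Δ/ε} translated by the vector v ∈ ℝ^d (the distribution of v plus i.i.d. Laplace(Δ/ε) noise in each coordinate). Then for any two vectors v, v' ∈ ℝ^d with ‖v − v'‖₁ ≤ Δ and any measurable set S ⊆ ℝ^d, μ_v(S) ≤ exp(ε) · μ_{v'}(S). Consequently, if a query sequence Q : D → ℝ^d has sensitivity at most Δ (meaning ‖Q(I) − Q(I')‖₁ ≤ Δ for all neighboring databases I, I'), then the mechanism that outputs Q(I) plus i.i.d. Laplace(Δ/ε) noise in each coordinate is ε-differentially private. -/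
/-! Moving the centre of a Laplace density of scale `b` by `t` changes it pointwise by a factor
at most `exp (|t| / b)`, by the triangle inequality. A finite product measure is monotone in its
factors and pulls out constant multiples, so `μ_v ≤ exp (‖v - v'‖₁ / b) • μ_{v'}` as measures, and
with `b = Δ / ε` the factor is at most `exp ε` whenever `‖v - v'‖₁ ≤ Δ`. -/

open MeasureTheory

/-- The Laplace measure on `ℝ` with scale `b`: density `x ↦ (1/(2b))·exp(−|x|/b)`
with respect to Lebesgue measure. -/
noncomputable def laplaceMeasure (b : ℝ) : Measure ℝ :=
  volume.withDensity fun x => ENNReal.ofReal ((2 * b)⁻¹ * Real.exp (-|x| / b))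

/-- The distribution of the vector `v` plus i.i.d. `Laplace(b)` noise in each coordinate:
the `d`-fold product of the Laplace measure with scale `b` translated by `v`
(coordinate `i` has density `x ↦ (1/(2b))·exp(−|x − v i|/b)`). -/
noncomputable def laplaceMechanism {d : ℕ} (b : ℝ) (v : Fin d → ℝ) :
    Measure (Fin d → ℝ) :=
  Measure.pi fun i =>
    volume.withDensity fun x => ENNReal.ofReal ((2 * b)⁻¹ * Real.exp (-|x - v i| / b))

namespace MeasureTheory.Measure

variable {ι : Type*} [Fintype ι] {α : ι → Type*} [∀ i, MeasurableSpace (α i)]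

theorem pi_mono {μ ν : ∀ i, Measure (α i)} (h : ∀ i, μ i ≤ ν i) :
    Measure.pi μ ≤ Measure.pi ν := by
  rw [Measure.pi, Measure.pi, ← toOuterMeasure_le, toMeasure_toOuterMeasure,
    toMeasure_toOuterMeasure]
  refine OuterMeasure.trim_mono (OuterMeasure.le_pi.2 fun s _ => ?_)
  exact (OuterMeasure.pi_pi_le _ s).trans (Finset.prod_le_prod' fun i _ => h i (s i))

theorem pi_smul (c : ι → NNReal) (μ : ∀ i, Measure (α i)) [∀ i, SigmaFinite (μ i)] :
    Measure.pi (fun i => c i • μ i) = (∏ i, c i) • Measure.pi μ := by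
  refine pi_eq fun s _ => ?_
  simp only [Measure.smul_apply, pi_pi, Finset.prod_mul_distrib,
    ENNReal.ofNNReal_finsetProd, ENNReal.smul_def, smul_eq_mul]

end MeasureTheory.Measure

open Real

theorem exp_neg_abs_sub_div_le {b : ℝ} (hb : 0 ≤ b) (x a a' : ℝ) :
    exp (-|x - a| / b) ≤ exp (|a - a'| / b) * exp (-|x - a'| / b) := by
  rw [← exp_add, exp_le_exp, ← add_div]
  refine div_le_div_of_nonneg_right ?_ hb
  have := abs_sub_abs_le_abs_sub (x - a') (x - a)
  rw [sub_sub_sub_cancel_left] at this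
  linarith

theorem withDensity_laplace_le_smul (μ : Measure ℝ) {b : ℝ} (hb : 0 ≤ b) (a a' : ℝ) :
    μ.withDensity (fun x => ENNReal.ofReal ((2 * b)⁻¹ * exp (-|x - a| / b)))
      ≤ (exp (|a - a'| / b)).toNNReal •
        μ.withDensity (fun x => ENNReal.ofReal ((2 * b)⁻¹ * exp (-|x - a'| / b))) := by
  rw [← Measure.coe_nnreal_smul, ← withDensity_smul' _ _ ENNReal.coe_ne_top]
  refine withDensity_mono (ae_of_all _ fun x => ?_)
  show ENNReal.ofReal _ ≤ ENNReal.ofReal _ * ENNReal.ofReal _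
  rw [← ENNReal.ofReal_mul (exp_nonneg _)]
  refine ENNReal.ofReal_le_ofReal ?_
  rw [mul_left_comm]
  exact mul_le_mul_of_nonneg_left (exp_neg_abs_sub_div_le hb x a a') (by positivity)

theorem laplaceMechanism_le_smul {d : ℕ} {b : ℝ} (hb : 0 ≤ b) (v v' : Fin d → ℝ) :
    laplaceMechanism b v
      ≤ ENNReal.ofReal (exp ((∑ i, |v i - v' i|) / b)) • laplaceMechanism b v' := by
  have hc : ∏ i, (exp (|v i - v' i| / b)).toNNReal = (exp ((∑ i, |v i - v' i|) / b)).toNNReal := by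
    rw [← Real.toNNReal_prod_of_nonneg fun i _ => (exp_pos _).le, ← exp_sum, Finset.sum_div]
  calc laplaceMechanism b v
      ≤ Measure.pi fun i => (exp (|v i - v' i| / b)).toNNReal •
          volume.withDensity fun x => ENNReal.ofReal ((2 * b)⁻¹ * exp (-|x - v' i| / b)) :=
        Measure.pi_mono fun i => withDensity_laplace_le_smul volume hb (v i) (v' i)
    _ = ENNReal.ofReal (exp ((∑ i, |v i - v' i|) / b)) • laplaceMechanism b v' := by
      rw [Measure.pi_smul, hc, ← Measure.coe_nnreal_smul, laplaceMechanism, ENNReal.ofReal]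

theorem laplace_mechanism_differentially_private_general
    {D : Type*} (nbrs : D → D → Prop) (ε Δ : ℝ) (hε : 0 < ε) (hΔ : 0 < Δ)
    (d : ℕ) :
    (∀ v v' : Fin d → ℝ, (∑ i, |v i - v' i|) ≤ Δ →
      ∀ S : Set (Fin d → ℝ), MeasurableSet S →
        laplaceMechanism (Δ / ε) v S ≤ ENNReal.ofReal (Real.exp ε) * laplaceMechanism (Δ / ε) v' S)
    ∧ (∀ Q : D → Fin d → ℝ,
        (∀ I I', nbrs I I' → (∑ i, |Q I i - Q I' i|) ≤ Δ) →
        ∀ I I', nbrs I I' → ∀ S : Set (Fin d → ℝ), MeasurableSet S →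
          laplaceMechanism (Δ / ε) (Q I) S
            ≤ ENNReal.ofReal (Real.exp ε) * laplaceMechanism (Δ / ε) (Q I') S) := by
  have hb : 0 < Δ / ε := div_pos hΔ hε
  have shift_bound : ∀ v v' : Fin d → ℝ, (∑ i, |v i - v' i|) ≤ Δ →
      ∀ S : Set (Fin d → ℝ), MeasurableSet S →
        laplaceMechanism (Δ / ε) v S
          ≤ ENNReal.ofReal (exp ε) * laplaceMechanism (Δ / ε) v' S := by
    intro v v' hvv' S _
    have hexp : (∑ i, |v i - v' i|) / (Δ / ε) ≤ ε := by
      rwa [div_le_iff₀ hb, mul_div_cancel₀ _ hε.ne']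
    calc laplaceMechanism (Δ / ε) v S
        ≤ ENNReal.ofReal (exp ((∑ i, |v i - v' i|) / (Δ / ε))) * laplaceMechanism (Δ / ε) v' S :=
          laplaceMechanism_le_smul hb.le v v' S
      _ ≤ ENNReal.ofReal (exp ε) * laplaceMechanism (Δ / ε) v' S := by gcongr
  exact ⟨shift_bound, fun Q hQ I I' hI => shift_bound (Q I) (Q I') (hQ I I' hI)⟩

/-- **The Laplace mechanism is ε-differentially private.**
(1) For any `v, v'` with `‖v − v'‖₁ ≤ Δ` and any measurable `S`,
`μ_v(S) ≤ exp(ε)·μ_{v'}(S)`, where `μ_v` is `v` plus i.i.d. `Laplace(Δ/ε)` noise.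
(2) Consequently, if a query sequence `Q` has sensitivity at most `Δ` with respect to the
neighbor relation `nbrs`, then the mechanism `I ↦ Q(I) + ⟨Lap(Δ/ε)⟩^d` is
ε-differentially private. -/
theorem laplace_mechanism_differentially_private
    {D : Type*} (nbrs : D → D → Prop) (ε Δ : ℝ) (hε : 0 < ε) (hΔ : 0 < Δ)
    (d : ℕ) (hd : 1 ≤ d) :
    (∀ v v' : Fin d → ℝ, (∑ i, |v i - v' i|) ≤ Δ →
      ∀ S : Set (Fin d → ℝ), MeasurableSet S →
        laplaceMechanism (Δ / ε) v S ≤ ENNReal.ofReal (Real.exp ε) * laplaceMechanism (Δ / ε) v' S)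
    ∧ (∀ Q : D → Fin d → ℝ,
        (∀ I I', nbrs I I' → (∑ i, |Q I i - Q I' i|) ≤ Δ) →
        ∀ I I', nbrs I I' → ∀ S : Set (Fin d → ℝ), MeasurableSet S →
          laplaceMechanism (Δ / ε) (Q I) S
            ≤ ENNReal.ofReal (Real.exp ε) * laplaceMechanism (Δ / ε) (Q I') S) :=
  laplace_mechanism_differentially_private_general nbrs ε Δ hε hΔ d
end

section
/- Let x, x' ∈ ℕ^n be two count vectors such that for exactly one index i, x'[i] = x[i] + 1, and x'[j] = x[j] for all j ≠ i. Let sort(x) and sort(x') denote the nondecreasing rearrangements of x and x'. Then ‖sort(x) − sort(x')‖₁ = 1; in fact, sort(x) and sort(x') agree at all positions except one, where they differ by exactly 1. (Hence the sorted query sequence S has sensitivity 1.) -/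
/-!
Sorting `x` gives a monotone tuple `g = x ∘ sort x` in which the value `c = x i` occupies a
block of consecutive positions; let `j₀` be the last of them. Raising `g j₀` to `c + 1` keeps
the tuple monotone, and the result is a rearrangement of `x'` (move one copy of `c` to the
position of `i` and bump it). A monotone rearrangement of `x'` is its sorting, so `sort x'`
and `sort x` differ only at `j₀`, and there by `1`.
-/

open Function Equiv

theorem Monotone.update_of_le {ι α : Type*} [LinearOrder ι] [Preorder α] {g : ι → α}
    (hg : Monotone g) {j₀ : ι} {v : α} (hlo : g j₀ ≤ v) (hhi : ∀ j, j₀ < j → v ≤ g j) :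
    Monotone (update g j₀ v) := by
  intro a b hab
  rcases eq_or_ne a j₀ with rfl | ha <;> rcases eq_or_ne b a with rfl | hb
  · exact le_rfl
  · rw [update_self, update_of_ne hb]
    exact hhi b (lt_of_le_of_ne hab hb.symm)
  · exact le_rfl
  · rw [update_of_ne ha]
    rcases eq_or_ne b j₀ with rfl | hb₀
    · rw [update_self]; exact (hg hab).trans hlo
    · rw [update_of_ne hb₀]; exact hg hab

theorem exists_last_apply_eq {ι α : Type*} [Fintype ι] [LinearOrder ι] (g : ι → α) {a : ι} :
    ∃ j₀, g j₀ = g a ∧ ∀ j, j₀ < j → g j ≠ g a := by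
  classical
  let s := Finset.univ.filter fun j => g j = g a
  have hs : s.Nonempty := ⟨a, by simp [s]⟩
  refine ⟨s.max' hs, (Finset.mem_filter.mp (s.max'_mem hs)).2, fun j hj hja => ?_⟩
  exact (s.le_max' j (by simp [s, hja])).not_gt hj

theorem update_comp_swap_of_apply_eq {α β : Type*} [DecidableEq α] {f : α → β} {i k : α}
    (hk : f k = f i) (v : β) : update f i v ∘ swap i k = update f k v := by
  funext j
  rcases eq_or_ne j i with rfl | hji <;> rcases eq_or_ne j k with rfl | hjk
  · simp
  · simp [hjk, hjk.symm, hk]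
  · simp [swap_apply_right]
  · simp [swap_apply_of_ne_of_ne hji hjk, hji, hjk]

namespace Tuple

variable {n : ℕ} {α : Type*} [LinearOrder α]

theorem update_comp_sort_update (f : Fin n → α) (i j₀ : Fin n) (v : α)
    (hj₀ : f (sort f j₀) = f i) (hlo : f i ≤ v) (hhi : ∀ j, j₀ < j → v ≤ f (sort f j)) :
    update f i v ∘ sort (update f i v) = update (f ∘ sort f) j₀ v := by
  have hperm : update f i v ∘ ⇑(swap i (sort f j₀) * sort f) = update (f ∘ sort f) j₀ v := by
    rw [Perm.coe_mul, ← comp_assoc, update_comp_swap_of_apply_eq hj₀, update_comp_equiv,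
      symm_apply_apply]
  rw [← hperm, eq_comm, comp_sort_eq_comp_iff_monotone, hperm]
  exact (monotone_sort f).update_of_le (by rwa [comp_apply, hj₀]) hhi

end Tuple

/-- **Sensitivity of the sorted (unattributed histogram) query is 1.**
If `x'` is obtained from the count vector `x : Fin n → ℕ` by incrementing exactly one
coordinate by `1`, then the nondecreasing rearrangements `sort(x)` and `sort(x')`
(given by `x ∘ Tuple.sort x` and `x' ∘ Tuple.sort x'`) satisfy
`‖sort(x) − sort(x')‖₁ = 1`; in fact they agree at all positions except one,
where they differ by exactly `1`. -/
theorem sorted_query_sensitivity_one (n : ℕ) (x x' : Fin n → ℕ) (i : Fin n)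
    (hx : x' i = x i + 1) (hother : ∀ j, j ≠ i → x' j = x j) :
    (∑ j, ((x' (Tuple.sort x' j) : ℤ) - (x (Tuple.sort x j) : ℤ)).natAbs) = 1
    ∧ ∃ j₀ : Fin n, x' (Tuple.sort x' j₀) = x (Tuple.sort x j₀) + 1
        ∧ ∀ j, j ≠ j₀ → x' (Tuple.sort x' j) = x (Tuple.sort x j) := by
  have hx' : x' = update x i (x i + 1) := eq_update_iff.mpr ⟨hx, hother⟩
  obtain ⟨j₀, hj₀, hlast⟩ := exists_last_apply_eq (x ∘ Tuple.sort x) (a := (Tuple.sort x).symm i)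
  simp only [comp_apply, apply_symm_apply] at hj₀ hlast
  have hsort : x' ∘ Tuple.sort x' = update (x ∘ Tuple.sort x) j₀ (x i + 1) := by
    refine hx' ▸ Tuple.update_comp_sort_update x i j₀ _ hj₀ (Nat.le_succ _) fun j hj => ?_
    have hle : x i ≤ x (Tuple.sort x j) := hj₀ ▸ Tuple.monotone_sort x hj.le
    exact hle.lt_of_ne' (hlast j hj)
  have hbump : x' (Tuple.sort x' j₀) = x (Tuple.sort x j₀) + 1 := by
    rw [← comp_apply (f := x'), hsort, update_self, hj₀]
  have hfix : ∀ j, j ≠ j₀ → x' (Tuple.sort x' j) = x (Tuple.sort x j) := fun j hj => by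
    rw [← comp_apply (f := x'), hsort, update_of_ne hj, comp_apply]
  refine ⟨?_, j₀, hbump, hfix⟩
  rw [Finset.sum_eq_single j₀ (fun j _ hj => by simp [hfix j hj]) (by simp), hbump]
  omega
end

section
/- Let s̃ ∈ ℝ^n, and for 1 ≤ i ≤ j ≤ n let M̃[i,j] = (Σ_{k=i}^{j} s̃[k])/(j−i+1) denote the mean of the entries of s̃ with indices in [i,j]. For each k ∈ {1,…,n}, define L_k = min_{j ∈ [k,n]} max_{i ∈ [1,j]} M̃[i,j] and U_k = max_{i ∈ [1,k]} min_{j ∈ [i,n]} M̃[i,j]. Then L_k = U_k for every k, and the vector s̄ defined by s̄[k] = L_k = U_k is the unique minimizer of ‖s̃ − t‖₂ over all nondecreasing vectors t ∈ ℝ^n (i.e., t[1] ≤ t[2] ≤ … ≤ t[n]). -/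
/-!
Write `S m = s̃ 0 + ⋯ + s̃ (m - 1)`, so that `M̃[i,j]` is the slope of the chord of `S` from `i`
to `j + 1`. For each `k` some chord from `a ≤ k` to `b > k` lies below every point `(c, S c)`,
`c ≤ n`; testing `L_k` with `j = b - 1` and `U_k` with `i = a` squeezes both onto its slope. So
`s̄` is the slope of the greatest convex minorant of `S`, and the partial sums of `s̄` stay below
`S`, meet it at `n` and wherever `s̄` jumps. Summation by parts then gives
`∑ (s̃ - s̄) (s̄ - t) ≥ 0` for every nondecreasing `t`, which is the projection inequality
characterising the minimizer.
-/

/-- `seqMean t i j` is the mean `M̃[i,j]` of the entries of `t` with indices in `[i,j]`. -/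
noncomputable def seqMean {n : ℕ} (t : Fin n → ℝ) (i j : Fin n) : ℝ :=
  (∑ k ∈ Finset.Icc i j, t k) / (((j : ℕ) - (i : ℕ) + 1 : ℕ) : ℝ)

/-- `isoL t k = min_{j ∈ [k,n]} max_{i ∈ [1,j]} M̃[i,j]`. -/
noncomputable def isoL {n : ℕ} (t : Fin n → ℝ) (k : Fin n) : ℝ :=
  (Finset.univ.filter fun j => k ≤ j).inf' ⟨k, by simp⟩ fun j =>
    (Finset.univ.filter fun i => i ≤ j).sup' ⟨j, by simp⟩ fun i => seqMean t i j

/-- `isoU t k = max_{i ∈ [1,k]} min_{j ∈ [i,n]} M̃[i,j]`. -/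
noncomputable def isoU {n : ℕ} (t : Fin n → ℝ) (k : Fin n) : ℝ :=
  (Finset.univ.filter fun i => i ≤ k).sup' ⟨k, by simp⟩ fun i =>
    (Finset.univ.filter fun j => i ≤ j).inf' ⟨i, by simp⟩ fun j => seqMean t i j

open Finset Function

namespace Isotonic

section Chords

variable (S : ℕ → ℝ)

noncomputable def chordSlope (a b : ℕ) : ℝ := (S b - S a) / ((b : ℝ) - a)

noncomputable def chordAt (a b : ℕ) (x : ℝ) : ℝ := S a + chordSlope S a b * (x - a)

structure IsSupportingChord (n a b : ℕ) : Prop where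
  lt : a < b
  le : b ≤ n
  chordAt_le : ∀ c ≤ n, chordAt S a b c ≤ S c

variable {S}

lemma chordSlope_mul_sub {a b : ℕ} (h : a < b) :
    chordSlope S a b * ((b : ℝ) - a) = S b - S a :=
  div_mul_cancel₀ _ (sub_pos.2 (Nat.cast_lt.2 h)).ne'

lemma chordAt_left (a b : ℕ) : chordAt S a b a = S a := by simp [chordAt]

lemma chordAt_right {a b : ℕ} (h : a < b) : chordAt S a b b = S b := by
  rw [chordAt, chordSlope_mul_sub h]; ring

lemma chordAt_sub_chordAt (a b : ℕ) (x y : ℝ) :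
    chordAt S a b y - chordAt S a b x = chordSlope S a b * (y - x) := by
  unfold chordAt; ring

lemma chordAt_natCast_succ (a b m : ℕ) :
    chordAt S a b (m + 1 : ℕ) = chordAt S a b m + chordSlope S a b := by
  push_cast [chordAt]; ring

lemma chordAt_lt_of_lt_chordAt_left {a b c : ℕ} {x : ℝ} (hab : a < b) (hcx : (c : ℝ) < x)
    (hxb : x < b) (hc : S c < chordAt S a b c) : chordAt S c b x < chordAt S a b x := by
  have hcb : c < b := Nat.cast_lt.1 (hcx.trans hxb)
  have h1 := chordSlope_mul_sub (S := S) hcb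
  have h2 := chordAt_right (S := S) hab
  unfold chordAt at *
  nlinarith [mul_pos (sub_pos.2 hc) (sub_pos.2 hxb)]

lemma chordAt_lt_of_lt_chordAt_right {a b c : ℕ} {x : ℝ} (hax : (a : ℝ) < x) (hxc : x < c)
    (hc : S c < chordAt S a b c) : chordAt S a c x < chordAt S a b x := by
  have hac : a < c := Nat.cast_lt.1 (hax.trans hxc)
  have h1 := chordSlope_mul_sub (S := S) hac
  unfold chordAt at *
  nlinarith [mul_pos (sub_pos.2 hc) (sub_pos.2 hax)]

lemma exists_isSupportingChord {n k : ℕ} (hk : k < n) :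
    ∃ a b, a ≤ k ∧ k < b ∧ IsSupportingChord S n a b := by
  -- a chord over `k` that is lowest at some point of `(k, k + 1)` is a side of the lower convex hull
  obtain ⟨x, hkx, hxk⟩ : ∃ x : ℝ, k < x ∧ x < k + 1 := ⟨k + 1 / 2, by linarith, by linarith⟩
  obtain ⟨⟨a, b⟩, hab, hmin⟩ := (range (k + 1) ×ˢ Ioc k n).exists_min_image
    (fun p => chordAt S p.1 p.2 x) ⟨(k, k + 1), by simp [hk]⟩
  simp only [mem_product, mem_range, mem_Ioc, Prod.forall] at hab hmin
  obtain ⟨hak, hkb, hbn⟩ : a ≤ k ∧ k < b ∧ b ≤ n := ⟨by omega, hab.2⟩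
  have below {c : ℕ} (hc : c ≤ k) : (c : ℝ) < x := (Nat.cast_le.2 hc).trans_lt hkx
  have above {c : ℕ} (hc : k < c) : x < c := hxk.trans_le (by exact_mod_cast hc)
  refine ⟨a, b, hak, hkb, by omega, hbn, fun c hc => not_lt.1 fun hlt => ?_⟩
  rcases le_or_gt c k with hck | hkc
  · exact (chordAt_lt_of_lt_chordAt_left (by omega) (below hck) (above hkb) hlt).not_ge
      (hmin c b ⟨by omega, hkb, hbn⟩)
  · exact (chordAt_lt_of_lt_chordAt_right (below hak) (above hkc) hlt).not_ge
      (hmin a c ⟨by omega, hkc, hc⟩)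

variable {n a b : ℕ}

lemma IsSupportingChord.chordSlope_left_le (h : IsSupportingChord S n a b) {i : ℕ} (hib : i < b) :
    chordSlope S i b ≤ chordSlope S a b := by
  have hi := h.chordAt_le i (by linarith [h.le])
  have hσ := chordAt_sub_chordAt (S := S) a b i b
  rw [chordAt_right h.lt] at hσ
  have hpos : (0 : ℝ) < b - i := sub_pos.2 (Nat.cast_lt.2 hib)
  refine le_of_mul_le_mul_right ?_ hpos
  rw [chordSlope_mul_sub hib]
  linarith

lemma IsSupportingChord.le_chordSlope_right (h : IsSupportingChord S n a b) {c : ℕ} (hac : a < c)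
    (hcn : c ≤ n) : chordSlope S a b ≤ chordSlope S a c := by
  have hc := h.chordAt_le c hcn
  have hσ := chordAt_sub_chordAt (S := S) a b a c
  rw [chordAt_left] at hσ
  have hpos : (0 : ℝ) < c - a := sub_pos.2 (Nat.cast_lt.2 hac)
  refine le_of_mul_le_mul_right ?_ hpos
  rw [chordSlope_mul_sub hac]
  linarith

lemma IsSupportingChord.chordAt_eq {a' b' : ℕ} (h : IsSupportingChord S n a b)
    (h' : IsSupportingChord S n a' b') (hσ : chordSlope S a' b' ≤ chordSlope S a b) {x : ℝ}
    (hax : a ≤ x) (hxb' : x ≤ b') : chordAt S a b x = chordAt S a' b' x := by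
  have hb' : chordAt S a b b' ≤ chordAt S a' b' b' :=
    (h.chordAt_le b' h'.le).trans (chordAt_right h'.lt).ge
  have ha : chordAt S a' b' a ≤ chordAt S a b a :=
    (h'.chordAt_le a (h.lt.le.trans h.le)).trans (chordAt_left a b).ge
  have e₁ := chordAt_sub_chordAt (S := S) a b x b'
  have e₂ := chordAt_sub_chordAt (S := S) a' b' x b'
  have e₃ := chordAt_sub_chordAt (S := S) a b a x
  have e₄ := chordAt_sub_chordAt (S := S) a' b' a x
  apply le_antisymm
  · nlinarith [mul_nonneg (sub_nonneg.2 hσ) (sub_nonneg.2 hxb')]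
  · nlinarith [mul_nonneg (sub_nonneg.2 hσ) (sub_nonneg.2 hax)]

end Chords

section HullSlope

noncomputable def partialSum (s : ℕ → ℝ) (m : ℕ) : ℝ := ∑ k ∈ range m, s k

@[simp] lemma partialSum_zero (s : ℕ → ℝ) : partialSum s 0 = 0 := by simp [partialSum]

lemma partialSum_succ (s : ℕ → ℝ) (m : ℕ) : partialSum s (m + 1) = partialSum s m + s m :=
  sum_range_succ s m

/-- `g` is the slope of the greatest convex minorant of `S` on `[0, n]`. -/
def IsHullSlope (S : ℕ → ℝ) (n : ℕ) (g : ℕ → ℝ) : Prop :=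
  ∀ k a b, a ≤ k → k < b → IsSupportingChord S n a b → g k = chordSlope S a b

variable {s g : ℕ → ℝ} {n : ℕ}

lemma IsHullSlope.partialSum_eq_chordAt (hg : IsHullSlope (partialSum s) n g)
    (hmono : MonotoneOn g (Set.Iio n)) :
    ∀ {m a b : ℕ}, a ≤ m → m < b → IsSupportingChord (partialSum s) n a b →
      partialSum g m = chordAt (partialSum s) a b m := by
  intro m
  induction m with
  | zero =>
    intro a b ha _ _
    obtain rfl := Nat.le_zero.1 ha
    rw [chordAt_left, partialSum_zero, partialSum_zero]
  | succ m ih =>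
    intro a b ha hb h
    have hm : m < n := by linarith [h.le]
    obtain ⟨a', b', ha', hb', h'⟩ := exists_isSupportingChord (S := partialSum s) hm
    have hσ : chordSlope (partialSum s) a' b' ≤ chordSlope (partialSum s) a b := by
      rw [← hg m a' b' ha' hb' h', ← hg (m + 1) a b ha hb h]
      exact hmono (Set.mem_Iio.2 hm) (Set.mem_Iio.2 (by linarith [h.le])) m.le_succ
    rw [partialSum_succ, ih ha' hb' h', hg m a' b' ha' hb' h', ← chordAt_natCast_succ,
      h.chordAt_eq h' hσ (by exact_mod_cast ha) (by exact_mod_cast hb')]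

lemma IsHullSlope.partialSum_eq (hg : IsHullSlope (partialSum s) n g)
    (hmono : MonotoneOn g (Set.Iio n)) : partialSum g n = partialSum s n := by
  cases n with
  | zero => simp
  | succ m =>
    obtain ⟨a, b, ha, hb, h⟩ := exists_isSupportingChord (S := partialSum s) m.lt_succ_self
    obtain rfl : b = m + 1 := le_antisymm h.le hb
    rw [partialSum_succ, hg.partialSum_eq_chordAt hmono ha hb h, hg m a _ ha hb h,
      ← chordAt_natCast_succ, chordAt_right h.lt]

lemma IsHullSlope.partialSum_le (hg : IsHullSlope (partialSum s) n g)
    (hmono : MonotoneOn g (Set.Iio n)) {m : ℕ} (hm : m ≤ n) :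
    partialSum g m ≤ partialSum s m := by
  rcases hm.lt_or_eq with hm | rfl
  · obtain ⟨a, b, ha, hb, h⟩ := exists_isSupportingChord (S := partialSum s) hm
    rw [hg.partialSum_eq_chordAt hmono ha hb h]
    exact h.chordAt_le m hm.le
  · exact (hg.partialSum_eq hmono).le

lemma IsHullSlope.partialSum_eq_or_eq (hg : IsHullSlope (partialSum s) n g)
    (hmono : MonotoneOn g (Set.Iio n)) {m : ℕ} (hm : m + 1 < n) :
    partialSum g (m + 1) = partialSum s (m + 1) ∨ g m = g (m + 1) := by
  obtain ⟨a, b, ha, hb, h⟩ := exists_isSupportingChord (S := partialSum s) hm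
  rcases ha.lt_or_eq with ha | rfl
  · exact .inr ((hg m a b (by omega) (by omega) h).trans (hg (m + 1) a b ha.le hb h).symm)
  · left
    rw [hg.partialSum_eq_chordAt hmono le_rfl hb h, chordAt_left]

end HullSlope

lemma sum_sub_mul_sub_nonneg {s g t : ℕ → ℝ} {n : ℕ}
    (hle : ∀ m ≤ n, partialSum g m ≤ partialSum s m) (heq : partialSum g n = partialSum s n)
    (hjump : ∀ m, m + 1 < n → partialSum g (m + 1) = partialSum s (m + 1) ∨ g m = g (m + 1))
    (ht : MonotoneOn t (Set.Iio n)) :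
    0 ≤ ∑ k ∈ range n, (s k - g k) * (g k - t k) := by
  have hR (m : ℕ) : ∑ k ∈ range m, (s k - g k) = partialSum s m - partialSum g m :=
    sum_sub_distrib s g
  have habel := sum_range_by_parts (fun k => g k - t k) (fun k => s k - g k) n
  simp only [smul_eq_mul, hR, heq, sub_self, mul_zero, zero_sub] at habel
  rw [sum_congr rfl fun k _ => mul_comm _ _, habel, neg_nonneg]
  refine sum_nonpos fun m hm => ?_
  have hm : m + 1 < n := by rw [mem_range] at hm; omega
  rcases hjump m hm with h | h
  · rw [h, sub_self, mul_zero]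
  · refine mul_nonpos_of_nonpos_of_nonneg ?_ (sub_nonneg.2 (hle _ hm.le))
    have := ht (Set.mem_Iio.2 (by omega)) (Set.mem_Iio.2 hm) m.le_succ
    linarith

lemma IsHullSlope.sum_sub_mul_sub_nonneg {s g t : ℕ → ℝ} {n : ℕ}
    (hg : IsHullSlope (partialSum s) n g) (hmono : MonotoneOn g (Set.Iio n))
    (ht : MonotoneOn t (Set.Iio n)) : 0 ≤ ∑ k ∈ range n, (s k - g k) * (g k - t k) :=
  Isotonic.sum_sub_mul_sub_nonneg (fun _ hm => hg.partialSum_le hmono hm) (hg.partialSum_eq hmono)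
    (fun _ hm => hg.partialSum_eq_or_eq hmono hm) ht

lemma monotoneOn_extend_val {α : Type*} [Preorder α] {n : ℕ} {f : Fin n → α}
    (hf : Monotone f) (e : ℕ → α) : MonotoneOn (extend Fin.val f e) (Set.Iio n) := by
  intro i hi j hj hij
  have h := hf (show (⟨i, hi⟩ : Fin n) ≤ ⟨j, hj⟩ from hij)
  rwa [← Fin.val_injective.extend_apply f e, ← Fin.val_injective.extend_apply f e] at h

lemma sum_sq_sub_eq {ι : Type*} [Fintype ι] (s g t : ι → ℝ) :
    ∑ i, (s i - t i) ^ 2 =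
      ∑ i, (s i - g i) ^ 2 + ∑ i, (g i - t i) ^ 2 + 2 * ∑ i, (s i - g i) * (g i - t i) := by
  rw [mul_sum, ← sum_add_distrib, ← sum_add_distrib]
  exact sum_congr rfl fun i _ => by ring

lemma sum_sq_sub_le_of_sum_mul_nonneg {ι : Type*} [Fintype ι] {s g t : ι → ℝ}
    (h : 0 ≤ ∑ i, (s i - g i) * (g i - t i)) :
    ∑ i, (s i - g i) ^ 2 ≤ ∑ i, (s i - t i) ^ 2 := by
  have hsq : 0 ≤ ∑ i, (g i - t i) ^ 2 := sum_nonneg fun i _ => sq_nonneg _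
  rw [sum_sq_sub_eq s g t]
  linarith

lemma eq_of_sum_sq_sub_eq_of_sum_mul_nonneg {ι : Type*} [Fintype ι] {s g t : ι → ℝ}
    (h : 0 ≤ ∑ i, (s i - g i) * (g i - t i))
    (heq : ∑ i, (s i - t i) ^ 2 = ∑ i, (s i - g i) ^ 2) : t = g := by
  have hsq : 0 ≤ ∑ i, (g i - t i) ^ 2 := sum_nonneg fun i _ => sq_nonneg _
  rw [sum_sq_sub_eq s g t] at heq
  have hzero : ∑ i, (g i - t i) ^ 2 = 0 := by linarith
  funext i
  have hi := (sum_eq_zero_iff_of_nonneg fun j _ => sq_nonneg (g j - t j)).1 hzero i (mem_univ i)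
  linarith [pow_eq_zero_iff two_ne_zero |>.1 hi]

section Fin

variable {n : ℕ} (st : Fin n → ℝ)

lemma seqMean_eq_chordSlope {i j : Fin n} (hij : i ≤ j) :
    seqMean st i j = chordSlope (partialSum (extend Fin.val st 0)) i (j + 1) := by
  have hsum : ∑ k ∈ Icc i j, st k = ∑ m ∈ Ico (i : ℕ) (j + 1), extend Fin.val st 0 m := by
    rw [Ico_add_one_right_eq_Icc, ← Fin.map_valEmbedding_Icc, sum_map]
    exact sum_congr rfl fun k _ => (Fin.val_injective.extend_apply st 0 k).symm
  rw [seqMean, chordSlope, hsum, sum_Ico_eq_sub _ (by omega), partialSum, partialSum]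
  push_cast [Nat.cast_sub (Fin.le_def.1 hij)]
  ring

lemma isoU_le_isoL (k : Fin n) : isoU st k ≤ isoL st k :=
  sup'_le _ _ fun i hi => le_inf' _ _ fun j hj => by
    simp only [mem_filter, mem_univ, true_and] at hi hj
    exact (inf'_le _ (by simp [hi.trans hj])).trans
      (le_sup' (fun i' => seqMean st i' j) (by simp [hi.trans hj]))

lemma isoL_mono : Monotone (isoL st) := fun _ _ hkk' =>
  inf'_mono _ (fun j hj => by
    simp only [mem_filter, mem_univ, true_and] at hj ⊢
    exact hkk'.trans hj) _

variable {st} {a b : ℕ} {k : Fin n}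

lemma isoL_le_chordSlope (h : IsSupportingChord (partialSum (extend Fin.val st 0)) n a b)
    (hkb : (k : ℕ) < b) : isoL st k ≤ chordSlope (partialSum (extend Fin.val st 0)) a b := by
  have hb : b - 1 < n := by have := h.le; omega
  refine (inf'_le _ (?_ : (⟨b - 1, hb⟩ : Fin n) ∈ _)).trans (sup'_le _ _ fun i hi => ?_)
  · simp only [mem_filter, mem_univ, true_and, Fin.le_def]
    omega
  · simp only [mem_filter, mem_univ, true_and] at hi
    have hib : (i : ℕ) < b := by rw [Fin.le_def] at hi; simp only at hi; omega
    rw [seqMean_eq_chordSlope st hi, show b - 1 + 1 = b by omega]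
    exact h.chordSlope_left_le hib

lemma chordSlope_le_isoU (h : IsSupportingChord (partialSum (extend Fin.val st 0)) n a b)
    (hak : a ≤ k) : chordSlope (partialSum (extend Fin.val st 0)) a b ≤ isoU st k := by
  have ha : a < n := h.lt.trans_le h.le
  have hmem : (⟨a, ha⟩ : Fin n) ∈ univ.filter fun i => i ≤ k := by
    simpa only [mem_filter, mem_univ, true_and, Fin.le_def] using hak
  refine le_sup'_of_le _ hmem (le_inf' _ _ fun j hj => ?_)
  simp only [mem_filter, mem_univ, true_and] at hj
  rw [seqMean_eq_chordSlope st hj]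
  exact h.le_chordSlope_right (Nat.lt_succ_of_le hj) j.isLt

variable (st)

lemma isoL_eq_isoU (k : Fin n) : isoL st k = isoU st k := by
  obtain ⟨a, b, ha, hb, h⟩ :=
    exists_isSupportingChord (S := partialSum (extend Fin.val st 0)) k.isLt
  exact le_antisymm ((isoL_le_chordSlope h hb).trans (chordSlope_le_isoU h ha)) (isoU_le_isoL st k)

lemma isHullSlope_isoL :
    IsHullSlope (partialSum (extend Fin.val st 0)) n (extend Fin.val (isoL st) 0) := by
  intro k a b ha hb h
  have hk : k < n := hb.trans_le h.le
  rw [show k = ((⟨k, hk⟩ : Fin n) : ℕ) from rfl, Fin.val_injective.extend_apply]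
  exact le_antisymm (isoL_le_chordSlope h hb) ((chordSlope_le_isoU h ha).trans (isoU_le_isoL st _))

lemma sum_sub_isoL_mul_nonneg {t : Fin n → ℝ} (ht : Monotone t) :
    0 ≤ ∑ k, (st k - isoL st k) * (isoL st k - t k) := by
  have h := (isHullSlope_isoL st).sum_sub_mul_sub_nonneg
    (monotoneOn_extend_val (isoL_mono st) 0) (monotoneOn_extend_val ht 0)
  rw [← Fin.sum_univ_eq_sum_range] at h
  simpa only [Fin.val_injective.extend_apply] using h

end Fin

end Isotonic

open Isotonic

theorem isotonic_minmax_closed_form_general (n : ℕ) (st : Fin n → ℝ) :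
    (∀ k, isoL st k = isoU st k)
    ∧ Monotone (isoL st)
    ∧ (∀ t : Fin n → ℝ, Monotone t →
        ∑ k, (st k - isoL st k) ^ 2 ≤ ∑ k, (st k - t k) ^ 2)
    ∧ (∀ t : Fin n → ℝ, Monotone t →
        ∑ k, (st k - t k) ^ 2 = ∑ k, (st k - isoL st k) ^ 2 → t = isoL st) := by
  refine ⟨isoL_eq_isoU st, isoL_mono st, fun t ht => ?_, fun t ht => ?_⟩
  · exact sum_sq_sub_le_of_sum_mul_nonneg (sum_sub_isoL_mul_nonneg st ht)
  · exact eq_of_sum_sq_sub_eq_of_sum_mul_nonneg (sum_sub_isoL_mul_nonneg st ht)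

/-- **Closed form for the minimum `L₂` nondecreasing (isotonic) solution.**
For `s̃ ∈ ℝ^n`, with `L_k = min_{j ∈ [k,n]} max_{i ∈ [1,j]} M̃[i,j]` and
`U_k = max_{i ∈ [1,k]} min_{j ∈ [i,n]} M̃[i,j]`, we have `L_k = U_k` for every `k`,
and `s̄ = L = U` is the unique nondecreasing vector minimizing `‖s̃ − t‖₂`
over all nondecreasing `t ∈ ℝ^n`. -/
theorem isotonic_minmax_closed_form (n : ℕ) (hn : 1 ≤ n) (st : Fin n → ℝ) :
    (∀ k, isoL st k = isoU st k)
    ∧ Monotone (isoL st)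
    ∧ (∀ t : Fin n → ℝ, Monotone t →
        ∑ k, (st k - isoL st k) ^ 2 ≤ ∑ k, (st k - t k) ^ 2)
    ∧ (∀ t : Fin n → ℝ, Monotone t →
        ∑ k, (st k - t k) ^ 2 = ∑ k, (st k - isoL st k) ^ 2 → t = isoL st) :=
  isotonic_minmax_closed_form_general n st
end

section
/- Consider the complete k-ary tree T with ℓ levels of nodes (k ≥ 2), and let h̃ : nodes(T) → ℝ be arbitrary. Define z : nodes(T) → ℝ bottom-up by: z[v] = h̃[v] if v is a leaf; and for an internal node v at height l (leaves have height 1), z[v] = ((k^l − k^{l−1})/(k^l − 1))·h̃[v] + ((k^{l−1} − 1)/(k^l − 1))·Σ_{u ∈ children(v)} z[u]. Define h̄ : nodes(T) → ℝ top-down by: h̄[r] = z[r] at the root r, and for a non-root node v with parent u, h̄[v] = z[v] + (1/k)·(h̄[u] − Σ_{w ∈ children(u)} z[w]). Then h̄ is the unique minimizer of Σ_{v} (t[v] − h̃[v])² over all t : nodes(T) → ℝ satisfying the consistency constraints t[v] = Σ_{u ∈ children(v)} t[u] for every internal node v. -/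
/-- A node of the complete `k`-ary tree with `ℓ` levels of nodes: a depth
`d ∈ {0, …, ℓ−1}` (root depth `0`, leaves depth `ℓ−1`) and an index among the
`k^d` nodes at that depth.  A node at depth `d` has height `ℓ − d` (leaves height 1). -/
abbrev TreeNode (k ℓ : ℕ) : Type := Σ d : Fin ℓ, Fin (k ^ (d : ℕ))

/-- The node at depth `d` with index `j`. -/
def mkNode {k ℓ : ℕ} (d : ℕ) (hd : d < ℓ) (j : Fin (k ^ d)) : TreeNode k ℓ := ⟨⟨d, hd⟩, j⟩

/-- The `r`-th child of the node at depth `d` with index `j`. -/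
def childNode {k ℓ : ℕ} (d : ℕ) (hd : d + 1 < ℓ) (j : Fin (k ^ d)) (r : Fin k) :
    TreeNode k ℓ :=
  ⟨⟨d + 1, hd⟩, ⟨(j : ℕ) * k + (r : ℕ), by
    have hj := j.isLt
    have hr := r.isLt
    calc (j : ℕ) * k + (r : ℕ) < ((j : ℕ) + 1) * k := by nlinarith
      _ ≤ k ^ d * k := Nat.mul_le_mul_right _ (by omega)
      _ = k ^ (d + 1) := (pow_succ k d).symm⟩⟩

/-- A node-value vector is consistent if every internal node's value equals the sum of
its children's values. -/
def Consistent {k ℓ : ℕ} (t : TreeNode k ℓ → ℝ) : Prop :=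
  ∀ (d : ℕ) (hd : d + 1 < ℓ) (j : Fin (k ^ d)),
    t (mkNode d (by omega) j) = ∑ r : Fin k, t (childNode d hd j r)

/-!
Write `e = h̄ − h̃`. Consistent vectors form a subspace containing `h̄`, so it suffices that `e`
is orthogonal to every consistent `s`. Summing `e · s` level by level, consistency makes the sum
telescope to `∑ A(leaf) · s(leaf)`, where `A(v)` is the sum of `e` along the path from the root
to `v`. The recursions for `z` and `h̄` give `A(v) = −(k⁻¹ + ⋯ + k⁻ᵐ) · (h̄[v] − Σ_{u child of v} z[u])`
for an internal node `v` of height `m + 1`, and pushing this one level further shows that `A`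
vanishes at the leaves.
-/

open Finset

section Pythagoras

variable {ι : Type*} [Fintype ι]

lemma sum_sq_sub_eq_add_of_sum_mul_eq_zero (a b c : ι → ℝ)
    (h : ∑ i, (b i - a i) * (c i - b i) = 0) :
    ∑ i, (c i - a i) ^ 2 = ∑ i, (b i - a i) ^ 2 + ∑ i, (c i - b i) ^ 2 := by
  have hsq : ∀ i, (c i - a i) ^ 2
      = (b i - a i) ^ 2 + (c i - b i) ^ 2 + 2 * ((b i - a i) * (c i - b i)) := fun i => by ring
  simp only [hsq, sum_add_distrib, ← mul_sum, h, mul_zero, add_zero]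

lemma sum_sq_sub_le_and_eq_of_orthogonal (P : (ι → ℝ) → Prop) (a b : ι → ℝ)
    (horth : ∀ t, P t → ∑ i, (b i - a i) * (t i - b i) = 0) :
    (∀ t, P t → ∑ i, (b i - a i) ^ 2 ≤ ∑ i, (t i - a i) ^ 2)
    ∧ (∀ t, P t → ∑ i, (t i - a i) ^ 2 = ∑ i, (b i - a i) ^ 2 → t = b) := by
  refine ⟨fun t ht => ?_, fun t ht heq => ?_⟩
  · rw [sum_sq_sub_eq_add_of_sum_mul_eq_zero a b t (horth t ht)]
    exact le_add_of_nonneg_right (sum_nonneg fun i _ => sq_nonneg _)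
  · have hzero : ∑ i, (t i - b i) ^ 2 = 0 := by
      linarith [sum_sq_sub_eq_add_of_sum_mul_eq_zero a b t (horth t ht)]
    funext i
    have hsq := (sum_eq_zero_iff_of_nonneg fun i _ => sq_nonneg (t i - b i)).1 hzero i (mem_univ i)
    exact sub_eq_zero.1 (pow_eq_zero_iff two_ne_zero |>.1 hsq)

end Pythagoras

section GeomWeight

/-- `geomWeight x m = x⁻¹ + x⁻² + ⋯ + x⁻ᵐ`. -/
noncomputable def geomWeight (x : ℝ) (m : ℕ) : ℝ := (x ^ m - 1) / (x ^ m * (x - 1))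

variable {x : ℝ}

lemma geomWeight_one (hx : 1 < x) : geomWeight x 1 = 1 / x := by
  have : x - 1 ≠ 0 := by linarith
  unfold geomWeight
  field_simp

lemma geomWeight_succ (hx : 1 < x) (m : ℕ) :
    geomWeight x (m + 1) = (geomWeight x m + 1) / x := by
  have : x - 1 ≠ 0 := by linarith
  have : x ≠ 0 := by linarith
  unfold geomWeight
  field_simp
  ring

lemma sub_eq_neg_geomWeight_mul_sub (hx : 1 < x) (m : ℕ) {z h s : ℝ}
    (hz : z = (x ^ (m + 1) - x ^ m) / (x ^ (m + 1) - 1) * h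
      + (x ^ m - 1) / (x ^ (m + 1) - 1) * s) :
    z - h = -geomWeight x m * (z - s) := by
  have : x - 1 ≠ 0 := by linarith
  have : x ^ m ≠ 0 := by positivity
  have : x ^ (m + 1) - 1 ≠ 0 := by linarith [one_lt_pow₀ hx (Nat.add_one_ne_zero m)]
  unfold geomWeight
  rw [hz]
  field_simp
  ring

end GeomWeight

section Indexing

variable {k : ℕ}

def childIdxEquiv (k d : ℕ) : Fin (k ^ d) × Fin k ≃ Fin (k ^ (d + 1)) :=
  finProdFinEquiv.trans (finCongr (pow_succ k d).symm)

lemma childIdxEquiv_apply_val {d : ℕ} (p : Fin (k ^ d)) (r : Fin k) :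
    (childIdxEquiv k d (p, r) : ℕ) = p * k + r := by
  simp [childIdxEquiv, finProdFinEquiv, mul_comm, add_comm]

def parentIdx {d : ℕ} (j : Fin (k ^ (d + 1))) : Fin (k ^ d) := ((childIdxEquiv k d).symm j).1

@[simp]
lemma parentIdx_childIdxEquiv {d : ℕ} (p : Fin (k ^ d)) (r : Fin k) :
    parentIdx (childIdxEquiv k d (p, r)) = p := by
  simp [parentIdx]

lemma sum_fin_pow_succ {M : Type*} [AddCommMonoid M] {d : ℕ} (f : Fin (k ^ (d + 1)) → M) :
    ∑ j, f j = ∑ p : Fin (k ^ d), ∑ r : Fin k, f (childIdxEquiv k d (p, r)) := by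
  rw [← Fintype.sum_prod_type', (childIdxEquiv k d).sum_comp f]

variable {ℓ : ℕ}

lemma childNode_eq_mkNode (d : ℕ) (hd : d + 1 < ℓ) (j : Fin (k ^ d)) (r : Fin k) :
    childNode d hd j r = mkNode (d + 1) hd (childIdxEquiv k d (j, r)) := by
  simp only [childNode, mkNode, Sigma.mk.injEq, heq_eq_eq, true_and]
  ext
  rw [childIdxEquiv_apply_val]

end Indexing

section PathSum

variable {k ℓ : ℕ}

def pathSum (f : TreeNode k ℓ → ℝ) : (d : ℕ) → d < ℓ → Fin (k ^ d) → ℝ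
  | 0, hd, j => f (mkNode 0 hd j)
  | d + 1, hd, j => pathSum f d (by omega) (parentIdx j) + f (mkNode (d + 1) hd j)

lemma pathSum_childNode (f : TreeNode k ℓ → ℝ) (d : ℕ) (hd : d + 1 < ℓ) (j : Fin (k ^ d))
    (r : Fin k) :
    pathSum f (d + 1) hd (childIdxEquiv k d (j, r))
      = pathSum f d (by omega) j + f (childNode d hd j r) := by
  rw [pathSum, parentIdx_childIdxEquiv, childNode_eq_mkNode]

noncomputable def levelSum (g : TreeNode k ℓ → ℝ) (d : ℕ) : ℝ :=
  if h : d < ℓ then ∑ j, g (mkNode d h j) else 0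

lemma sum_eq_sum_range_levelSum (g : TreeNode k ℓ → ℝ) :
    ∑ v, g v = ∑ d ∈ range ℓ, levelSum g d := by
  rw [← Fin.sum_univ_eq_sum_range, ← univ_sigma_univ, sum_sigma]
  refine sum_congr rfl fun d _ => ?_
  rw [levelSum, dif_pos d.isLt]
  rfl

lemma Consistent.sum_pathSum_mul_succ {s : TreeNode k ℓ → ℝ} (hs : Consistent s)
    (f : TreeNode k ℓ → ℝ) (d : ℕ) (hd : d + 1 < ℓ) :
    ∑ j, pathSum f (d + 1) hd j * s (mkNode (d + 1) hd j)
      = ∑ j, pathSum f d (by omega) j * s (mkNode d (by omega) j)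
        + levelSum (fun v => f v * s v) (d + 1) := by
  rw [levelSum, dif_pos hd, sum_fin_pow_succ, sum_fin_pow_succ, ← sum_add_distrib]
  refine sum_congr rfl fun j _ => ?_
  simp only [pathSum_childNode, ← childNode_eq_mkNode, add_mul, sum_add_distrib, ← mul_sum,
    ← hs d hd j]

lemma Consistent.sum_mul_eq_sum_pathSum_mul {s : TreeNode k ℓ → ℝ} (hs : Consistent s)
    (f : TreeNode k ℓ → ℝ) (hℓ : 1 ≤ ℓ) :
    ∑ v, f v * s v
      = ∑ j, pathSum f (ℓ - 1) (by omega) j * s (mkNode (ℓ - 1) (by omega) j) := by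
  have hprefix : ∀ d (hd : d < ℓ), ∑ e ∈ range (d + 1), levelSum (fun v => f v * s v) e
      = ∑ j, pathSum f d hd j * s (mkNode d hd j) := by
    intro d
    induction d with
    | zero => intro hd; simp [levelSum, hd, pathSum]
    | succ d ih =>
      intro hd
      rw [sum_range_succ, ih, hs.sum_pathSum_mul_succ]
  rw [sum_eq_sum_range_levelSum, ← hprefix, Nat.sub_add_cancel hℓ]

end PathSum

section ClosedForm

variable {k ℓ : ℕ} {ht z hb : TreeNode k ℓ → ℝ}

lemma pathSum_residual_eq (hk : 1 < (k : ℝ)) (h0 : 0 < ℓ)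
    (hz : ∀ (d : ℕ) (hd : d + 1 < ℓ) (j : Fin (k ^ d)),
      z (mkNode d (by omega) j) - ht (mkNode d (by omega) j)
        = -geomWeight k (ℓ - d - 1) * (z (mkNode d (by omega) j) - ∑ r, z (childNode d hd j r)))
    (hbroot : hb (mkNode 0 h0 ⟨0, by simp⟩) = z (mkNode 0 h0 ⟨0, by simp⟩))
    (hbrec : ∀ (d : ℕ) (hd : d + 1 < ℓ) (j : Fin (k ^ d)) (r : Fin k),
      hb (childNode d hd j r)
        = z (childNode d hd j r)
          + (1 / (k : ℝ)) * (hb (mkNode d (by omega) j) - ∑ r' : Fin k, z (childNode d hd j r')))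
    (d : ℕ) (hd : d + 1 < ℓ) (j : Fin (k ^ d)) :
    pathSum (fun v => hb v - ht v) d (by omega) j
      = -geomWeight k (ℓ - d - 1) * (hb (mkNode d (by omega) j) - ∑ r, z (childNode d hd j r)) := by
  induction d with
  | zero =>
    obtain rfl : j = ⟨0, by simp⟩ := Fin.ext (Nat.lt_one_iff.1 (by simpa using j.isLt))
    rw [pathSum, hbroot, hz 0 hd]
  | succ d ih =>
    obtain ⟨⟨p, r⟩, rfl⟩ := (childIdxEquiv k d).surjective j
    have hzc := hz (d + 1) hd (childIdxEquiv k d (p, r))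
    rw [← childNode_eq_mkNode] at hzc ⊢
    rw [pathSum_childNode, ih (by omega), hbrec,
      show ℓ - d - 1 = ℓ - (d + 1) - 1 + 1 by omega, geomWeight_succ hk]
    linear_combination hzc

lemma pathSum_residual_leaf_eq_zero (hk : 1 < (k : ℝ)) (hℓ : 1 ≤ ℓ)
    (hzleaf : ∀ j : Fin (k ^ (ℓ - 1)),
      z (mkNode (ℓ - 1) (by omega) j) = ht (mkNode (ℓ - 1) (by omega) j))
    (hz : ∀ (d : ℕ) (hd : d + 1 < ℓ) (j : Fin (k ^ d)),
      z (mkNode d (by omega) j) - ht (mkNode d (by omega) j)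
        = -geomWeight k (ℓ - d - 1) * (z (mkNode d (by omega) j) - ∑ r, z (childNode d hd j r)))
    (hbroot : hb (mkNode 0 (by omega) ⟨0, by simp⟩) = z (mkNode 0 (by omega) ⟨0, by simp⟩))
    (hbrec : ∀ (d : ℕ) (hd : d + 1 < ℓ) (j : Fin (k ^ d)) (r : Fin k),
      hb (childNode d hd j r)
        = z (childNode d hd j r)
          + (1 / (k : ℝ)) * (hb (mkNode d (by omega) j) - ∑ r' : Fin k, z (childNode d hd j r')))
    (j : Fin (k ^ (ℓ - 1))) :
    pathSum (fun v => hb v - ht v) (ℓ - 1) (by omega) j = 0 := by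
  obtain rfl | ⟨n, rfl⟩ : ℓ = 1 ∨ ∃ n, ℓ = n + 2 :=
    (eq_or_lt_of_le hℓ).imp Eq.symm fun h => ⟨ℓ - 2, by omega⟩
  · obtain rfl : j = ⟨0, by simp⟩ := Fin.ext (Nat.lt_one_iff.1 (by simpa using j.isLt))
    rw [pathSum, hbroot, hzleaf, sub_self]
  · obtain ⟨⟨p, r⟩, rfl⟩ := (childIdxEquiv k n).surjective j
    have hzc : z (childNode n (by omega) p r) = ht (childNode n (by omega) p r) := by
      rw [childNode_eq_mkNode]
      exact hzleaf _
    change pathSum _ (n + 1) _ _ = 0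
    rw [pathSum_childNode, pathSum_residual_eq hk (by omega) hz hbroot hbrec n (by omega), hbrec,
      show n + 2 - n - 1 = 1 by omega, geomWeight_one hk, hzc]
    ring

end ClosedForm

section Consistency

variable {k ℓ : ℕ}

lemma Consistent.sub {s t : TreeNode k ℓ → ℝ} (hs : Consistent s) (ht : Consistent t) :
    Consistent (fun v => s v - t v) := by
  intro d hd j
  simp only [hs d hd j, ht d hd j, sum_sub_distrib]

lemma consistent_of_children_share_surplus {z hb : TreeNode k ℓ → ℝ} (hk : (k : ℝ) ≠ 0)
    (hbrec : ∀ (d : ℕ) (hd : d + 1 < ℓ) (j : Fin (k ^ d)) (r : Fin k),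
      hb (childNode d hd j r)
        = z (childNode d hd j r)
          + (1 / (k : ℝ)) * (hb (mkNode d (by omega) j) - ∑ r' : Fin k, z (childNode d hd j r'))) :
    Consistent hb := by
  intro d hd j
  rw [sum_congr rfl fun r _ => hbrec d hd j r, sum_add_distrib, sum_const, card_univ,
    Fintype.card_fin, nsmul_eq_mul]
  field_simp
  ring

end Consistency

/-- **Closed form for the minimum `L₂` consistent solution on the tree.**
Let `h̃` be arbitrary node values on the complete `k`-ary tree with `ℓ` levels.
Let `z` be defined bottom-up by `z[v] = h̃[v]` at leaves and, at an internal node `v`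
of height `l`, `z[v] = ((k^l − k^{l−1})/(k^l − 1))·h̃[v] + ((k^{l−1} − 1)/(k^l − 1))·Σ_{u ∈ children(v)} z[u]`;
and let `h̄` be defined top-down by `h̄[root] = z[root]` and
`h̄[v] = z[v] + (1/k)·(h̄[parent v] − Σ_{w ∈ children(parent v)} z[w])` otherwise.
Then `h̄` is the unique minimizer of `Σ_v (t[v] − h̃[v])²` over all consistent `t`. -/
theorem tree_inference_closed_form (k ℓ : ℕ) (hk : 2 ≤ k) (hℓ : 1 ≤ ℓ)
    (ht z hb : TreeNode k ℓ → ℝ)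
    (hzleaf : ∀ j : Fin (k ^ (ℓ - 1)),
      z (mkNode (ℓ - 1) (by omega) j) = ht (mkNode (ℓ - 1) (by omega) j))
    (hzint : ∀ (d : ℕ) (hd : d + 1 < ℓ) (j : Fin (k ^ d)),
      z (mkNode d (by omega) j)
        = (((k : ℝ) ^ (ℓ - d) - (k : ℝ) ^ (ℓ - d - 1)) / ((k : ℝ) ^ (ℓ - d) - 1))
              * ht (mkNode d (by omega) j)
          + (((k : ℝ) ^ (ℓ - d - 1) - 1) / ((k : ℝ) ^ (ℓ - d) - 1))
              * ∑ r : Fin k, z (childNode d hd j r))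
    (hbroot : hb (mkNode 0 (by omega) ⟨0, by simp⟩) = z (mkNode 0 (by omega) ⟨0, by simp⟩))
    (hbrec : ∀ (d : ℕ) (hd : d + 1 < ℓ) (j : Fin (k ^ d)) (r : Fin k),
      hb (childNode d hd j r)
        = z (childNode d hd j r)
          + (1 / (k : ℝ)) * (hb (mkNode d (by omega) j) - ∑ r' : Fin k, z (childNode d hd j r'))) :
    Consistent hb
    ∧ (∀ t : TreeNode k ℓ → ℝ, Consistent t →
        ∑ v, (hb v - ht v) ^ 2 ≤ ∑ v, (t v - ht v) ^ 2)
    ∧ (∀ t : TreeNode k ℓ → ℝ, Consistent t →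
        ∑ v, (t v - ht v) ^ 2 = ∑ v, (hb v - ht v) ^ 2 → t = hb) := by
  have hk' : 1 < (k : ℝ) := by exact_mod_cast hk
  have hz (d : ℕ) (hd : d + 1 < ℓ) (j : Fin (k ^ d)) :
      z (mkNode d (by omega) j) - ht (mkNode d (by omega) j)
        = -geomWeight k (ℓ - d - 1) * (z (mkNode d (by omega) j) - ∑ r, z (childNode d hd j r)) :=
    sub_eq_neg_geomWeight_mul_sub hk' _ <| by
      rw [← show ℓ - d = ℓ - d - 1 + 1 by omega]
      exact hzint d hd j
  have hcons : Consistent hb := consistent_of_children_share_surplus (by positivity) hbrec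
  refine ⟨hcons, sum_sq_sub_le_and_eq_of_orthogonal Consistent ht hb fun t htc => ?_⟩
  rw [(htc.sub hcons).sum_mul_eq_sum_pathSum_mul _ hℓ]
  refine sum_eq_zero fun j _ => ?_
  rw [pathSum_residual_leaf_eq_zero hk' hℓ hzleaf hz hbroot hbrec, zero_mul]
end
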